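/- arXiv:2208.13989 — 3 statements merged into one kernel-verified Lean document; each statement's English description precedes it below -/
import Mathlib

section
/- For every natural number n, every α > 0 and every b ∈ ℝ: ∫₀^∞ xⁿ e^{−α x} cos(b x) dx = n! · cos( (n+1) · arctan(b/α) ) / (α² + b²)^{(n+1)/2}. -/
/-!
Since `cos (b x) = Re e^{i b x}`, the integral is the real part of the Laplace transform
`∫₀^∞ xⁿ e^{-z x} dx = n! / z^{n+1}` (`Re z > 0`, by repeated integration by parts)
at `z = α - i b`. Writing `z = √(α² + b²) e^{-i arctan (b/α)}` gives the right-hand side.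
-/

open MeasureTheory Real Nat
open Filter Set Topology
open Complex (I arg)
open scoped Complex

lemma norm_ofReal_pow_mul_cexp_neg_mul (n : ℕ) (z : ℂ) {x : ℝ} (hx : 0 ≤ x) :
    ‖(x : ℂ) ^ n * cexp (-z * x)‖ = x ^ (n : ℝ) * Real.exp (-z.re * x) := by
  rw [norm_mul, norm_pow, Complex.norm_exp, Complex.norm_real, Real.norm_of_nonneg hx,
    Real.rpow_natCast]
  simp

lemma integrableOn_ofReal_pow_mul_cexp_neg_mul_Ioi (n : ℕ) {z : ℂ} (hz : 0 < z.re) :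
    IntegrableOn (fun x : ℝ ↦ (x : ℂ) ^ n * cexp (-z * x)) (Ioi 0) := by
  have hreal : IntegrableOn (fun x : ℝ ↦ x ^ (n : ℝ) * Real.exp (-z.re * x)) (Ioi 0) := by
    simpa using integrableOn_rpow_mul_exp_neg_mul_rpow (p := 1)
      (neg_one_lt_zero.trans_le n.cast_nonneg) one_pos hz
  refine Integrable.mono' hreal (by fun_prop) ?_
  filter_upwards [ae_restrict_mem measurableSet_Ioi] with x hx
  exact (norm_ofReal_pow_mul_cexp_neg_mul n z (le_of_lt hx)).le

lemma tendsto_ofReal_pow_mul_cexp_neg_mul_atTop (n : ℕ) {z : ℂ} (hz : 0 < z.re) :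
    Tendsto (fun x : ℝ ↦ (x : ℂ) ^ n * cexp (-z * x)) atTop (𝓝 0) := by
  rw [tendsto_zero_iff_norm_tendsto_zero]
  refine (tendsto_rpow_mul_exp_neg_mul_atTop_nhds_zero n z.re hz).congr' ?_
  filter_upwards [eventually_ge_atTop 0] with x hx
  exact (norm_ofReal_pow_mul_cexp_neg_mul n z hx).symm

lemma hasDerivAt_ofReal_pow_succ_mul_cexp_neg_mul (n : ℕ) (z : ℂ) (x : ℝ) :
    HasDerivAt (fun x : ℝ ↦ (x : ℂ) ^ (n + 1) * cexp (-z * x))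
      ((n + 1) * ((x : ℂ) ^ n * cexp (-z * x)) - z * ((x : ℂ) ^ (n + 1) * cexp (-z * x)))
      x := by
  have hpow : HasDerivAt (fun x : ℝ ↦ (x : ℂ) ^ (n + 1)) ((n + 1) * (x : ℂ) ^ n) x := by
    simpa [mul_comm] using (hasDerivAt_pow (n + 1) (x : ℂ)).comp_ofReal
  have hexp : HasDerivAt (fun x : ℝ ↦ cexp (-z * x)) (cexp (-z * x) * -z) x := by
    simpa using ((hasDerivAt_id (x : ℂ)).const_mul (-z)).cexp.comp_ofReal
  exact (hpow.mul hexp).congr_deriv (by ring)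

lemma mul_integral_ofReal_pow_succ_mul_cexp_neg_mul_Ioi (n : ℕ) {z : ℂ} (hz : 0 < z.re) :
    z * ∫ x in Ioi (0 : ℝ), (x : ℂ) ^ (n + 1) * cexp (-z * x)
      = (n + 1) * ∫ x in Ioi (0 : ℝ), (x : ℂ) ^ n * cexp (-z * x) := by
  have hint := integrableOn_ofReal_pow_mul_cexp_neg_mul_Ioi n hz
  have hint' := integrableOn_ofReal_pow_mul_cexp_neg_mul_Ioi (n + 1) hz
  have hparts := integral_Ioi_of_hasDerivAt_of_tendsto'
    (fun x _ ↦ hasDerivAt_ofReal_pow_succ_mul_cexp_neg_mul n z x)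
    ((hint.const_mul _).sub (hint'.const_mul z))
    (tendsto_ofReal_pow_mul_cexp_neg_mul_atTop (n + 1) hz)
  rw [integral_sub (hint.const_mul _) (hint'.const_mul z), integral_const_mul,
    integral_const_mul] at hparts
  rw [Complex.ofReal_zero, zero_pow n.succ_ne_zero, zero_mul, sub_zero] at hparts
  linear_combination -hparts

theorem integral_ofReal_pow_mul_cexp_neg_mul_Ioi (n : ℕ) {z : ℂ} (hz : 0 < z.re) :
    ∫ x in Ioi (0 : ℝ), (x : ℂ) ^ n * cexp (-z * x) = n ! / z ^ (n + 1) := by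
  have hz0 : z ≠ 0 := by rintro rfl; simp at hz
  induction n with
  | zero => simpa using integral_exp_mul_complex_Ioi (a := -z) (by simpa using hz) 0
  | succ n ih =>
    calc ∫ x in Ioi (0 : ℝ), (x : ℂ) ^ (n + 1) * cexp (-z * x)
        = z⁻¹ * (z * ∫ x in Ioi (0 : ℝ), (x : ℂ) ^ (n + 1) * cexp (-z * x)) := by
          rw [inv_mul_cancel_left₀ hz0]
      _ = z⁻¹ * ((n + 1) * (n ! / z ^ (n + 1))) := by
          rw [mul_integral_ofReal_pow_succ_mul_cexp_neg_mul_Ioi n hz, ih]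
      _ = (n + 1)! / z ^ (n + 1 + 1) := by
          push_cast [factorial_succ]
          field_simp
          ring

lemma integral_pow_mul_exp_neg_mul_mul_cos_eq_re (n : ℕ) {α : ℝ} (hα : 0 < α) (b : ℝ) :
    ∫ x in Ioi (0 : ℝ), x ^ n * Real.exp (-α * x) * Real.cos (b * x)
      = (∫ x in Ioi (0 : ℝ), (x : ℂ) ^ n * cexp (-(α - b * I) * x)).re := by
  rw [← RCLike.re_to_complex, ← integral_re
    (integrableOn_ofReal_pow_mul_cexp_neg_mul_Ioi n (by simpa using hα))]
  refine setIntegral_congr_fun measurableSet_Ioi fun x _ ↦ ?_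
  rw [RCLike.re_to_complex, ← Complex.ofReal_pow, Complex.re_ofReal_mul, Complex.exp_re]
  simp [mul_assoc]

lemma arg_eq_arctan_of_re_pos {z : ℂ} (hz : 0 < z.re) : arg z = arctan (z.im / z.re) := by
  have hlt : |arg z| < π / 2 := Complex.abs_arg_lt_pi_div_two_iff.mpr (Or.inl hz)
  rw [← Complex.tan_arg, arctan_tan (neg_lt_of_abs_lt hlt) (lt_of_abs_lt hlt)]

lemma re_ofReal_div_pow (c : ℝ) (z : ℂ) (m : ℕ) :
    ((c : ℂ) / z ^ m).re = c * Real.cos (m * arg z) / ‖z‖ ^ m := by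
  conv_lhs => rw [← Complex.norm_mul_exp_arg_mul_I z]
  rw [mul_pow, ← Complex.exp_nat_mul, div_mul_eq_div_div, div_eq_mul_inv _ (cexp _),
    ← Complex.exp_neg, ← Complex.ofReal_pow, ← Complex.ofReal_div, Complex.re_ofReal_mul,
    show -(m * (arg z * I)) = ((-(m * arg z) : ℝ) : ℂ) * I by push_cast; ring,
    Complex.exp_ofReal_mul_I_re, Real.cos_neg, div_mul_eq_mul_div]

/-- the tabulated Fourier cosine transform
`∫₀^∞ xⁿ e^{−αx} cos(bx) dx = n! cos((n+1) arctan(b/α)) / (α² + b²)^{(n+1)/2}`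
for `α > 0`, `b ∈ ℝ`, `n ∈ ℕ`. -/
theorem integral_pow_mul_exp_neg_mul_cos (n : ℕ) (α b : ℝ) (hα : 0 < α) :
    (∫ x in Set.Ioi (0 : ℝ), x ^ n * Real.exp (-α * x) * Real.cos (b * x))
      = (n ! : ℝ) * Real.cos (((n : ℝ) + 1) * Real.arctan (b / α))
          / (α ^ 2 + b ^ 2) ^ (((n : ℝ) + 1) / 2) := by
  have hz : 0 < ((α : ℂ) - b * I).re := by simpa using hα
  rw [integral_pow_mul_exp_neg_mul_mul_cos_eq_re n hα b,
    integral_ofReal_pow_mul_cexp_neg_mul_Ioi n hz, ← Complex.ofReal_natCast, re_ofReal_div_pow,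
    arg_eq_arctan_of_re_pos hz, Complex.norm_eq_sqrt_sq_add_sq,
    rpow_div_two_eq_sqrt _ (by positivity), ← Nat.cast_add_one, rpow_natCast]
  simp [neg_div, arctan_neg]
end

section
/- Fix integers N ≥ 1 and 0 ≤ ℓ ≤ N−1 and a real β > 0. Let R_{Nℓ}(ρ) = e^{−ρ/2} ρ^ℓ · Σ_{t=0}^{N−ℓ−1} (−1)^t · binom(N+ℓ, N−ℓ−1−t) · ρ^t / t! . Then for every p ∈ ℝ, with θ = arctan(p/β), the radial momentum-space wave function ψ_{Nℓ}(p) = ∫₀^∞ e^{i p r} R_{Nℓ}(2β r) r dr is given by the finite trigonometric expansion ψ_{Nℓ}(p) = Σ_{t=0}^{N−ℓ−1} b_t · e^{i(ℓ+t+2)θ} · (cos θ)^{ℓ+t+2}, where b_t = (−1)^t · binom(N+ℓ, N−ℓ−1−t) · (ℓ+t+1)! · 2^{ℓ+t+2} / ( t! · (2β)² ). -/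
open MeasureTheory Complex Real Nat

open Filter Topology Set

/-!
With `a = β - p i`, the integrand is a polynomial in `r` times `e^{-a r}`, and
`∫₀^∞ rᵏ e^{-a r} dr = k! / a^{k+1}` for `Re a > 0` (integration by parts, by induction
on `k`).
For `θ = arctan (p / β)` one has `e^{iθ} cos θ = 1 / (1 - i tan θ) = β / a`, so the powers of
`1 / a` are exactly the trigonometric factors `e^{i m θ} cos^m θ` of the expansion.
-/

lemma norm_pow_mul_cexp_neg_mul (a : ℂ) {x : ℝ} (hx : 0 ≤ x) (n : ℕ) :
    ‖(x : ℂ) ^ n * cexp (-(a * x))‖ = x ^ (n : ℝ) * rexp (-a.re * x) := by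
  simp [norm_exp, abs_of_nonneg hx, mul_re]

lemma integrableOn_pow_mul_cexp_neg_mul_Ioi {a : ℂ} (ha : 0 < a.re) (n : ℕ) :
    IntegrableOn (fun x : ℝ => (x : ℂ) ^ n * cexp (-(a * x))) (Ioi 0) := by
  have hdom : IntegrableOn (fun x : ℝ => x ^ (n : ℝ) * rexp (-a.re * x ^ (1 : ℝ))) (Ioi 0) :=
    integrableOn_rpow_mul_exp_neg_mul_rpow (by linarith [n.cast_nonneg (α := ℝ)]) one_pos ha
  refine hdom.mono' (by fun_prop) ?_
  filter_upwards [ae_restrict_mem measurableSet_Ioi] with x hx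
  rw [norm_pow_mul_cexp_neg_mul a (le_of_lt hx), rpow_one]

lemma tendsto_pow_mul_cexp_neg_mul_atTop {a : ℂ} (ha : 0 < a.re) (n : ℕ) :
    Tendsto (fun x : ℝ => (x : ℂ) ^ n * cexp (-(a * x))) atTop (𝓝 0) := by
  refine squeeze_zero_norm' ?_ (tendsto_rpow_mul_exp_neg_mul_atTop_nhds_zero n a.re ha)
  filter_upwards [eventually_ge_atTop 0] with x hx
  rw [norm_pow_mul_cexp_neg_mul a hx]

lemma hasDerivAt_cexp_neg_mul (a : ℂ) (x : ℝ) :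
    HasDerivAt (fun x : ℝ => cexp (-(a * x))) (-a * cexp (-(a * x))) x := by
  simpa [mul_comm] using
    ((((hasDerivAt_id (x : ℂ)).const_mul a).neg).cexp).comp_ofReal

lemma hasDerivAt_pow_succ_mul_cexp_neg_mul (a : ℂ) (n : ℕ) (x : ℝ) :
    HasDerivAt (fun x : ℝ => (x : ℂ) ^ (n + 1) * cexp (-(a * x)))
      ((n + 1) * ((x : ℂ) ^ n * cexp (-(a * x))) - a * ((x : ℂ) ^ (n + 1) * cexp (-(a * x))))
      x := by
  have hpow : HasDerivAt (fun x : ℝ => (x : ℂ) ^ (n + 1)) ((n + 1) * (x : ℂ) ^ n) x := by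
    simpa using (hasDerivAt_pow (n + 1) (x : ℂ)).comp_ofReal
  exact (hpow.mul (hasDerivAt_cexp_neg_mul a x)).congr_deriv (by ring)

lemma integral_pow_mul_cexp_neg_mul_Ioi {a : ℂ} (ha : 0 < a.re) (n : ℕ) :
    ∫ x in Ioi (0 : ℝ), (x : ℂ) ^ n * cexp (-(a * x)) = n ! / a ^ (n + 1) := by
  have ha0 : a ≠ 0 := fun h => by simp [h] at ha
  induction n with
  | zero =>
    have hint : IntegrableOn (fun x : ℝ => cexp (-(a * x))) (Ioi 0) := by
      simpa using integrableOn_pow_mul_cexp_neg_mul_Ioi ha 0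
    have h := integral_Ioi_of_hasDerivAt_of_tendsto' (fun x _ => hasDerivAt_cexp_neg_mul a x)
      (hint.const_mul (-a)) (by simpa using tendsto_pow_mul_cexp_neg_mul_atTop ha 0)
    rw [integral_const_mul, ofReal_zero, mul_zero, neg_zero, Complex.exp_zero] at h
    simp only [pow_zero, one_mul, factorial_zero, cast_one, zero_add, pow_one]
    field_simp
    linear_combination -h
  | succ n ih =>
    have h := integral_Ioi_of_hasDerivAt_of_tendsto'
      (fun x _ => hasDerivAt_pow_succ_mul_cexp_neg_mul a n x)
      (((integrableOn_pow_mul_cexp_neg_mul_Ioi ha n).const_mul _).sub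
        ((integrableOn_pow_mul_cexp_neg_mul_Ioi ha (n + 1)).const_mul _))
      (tendsto_pow_mul_cexp_neg_mul_atTop ha (n + 1))
    rw [integral_sub ((integrableOn_pow_mul_cexp_neg_mul_Ioi ha n).const_mul _)
      ((integrableOn_pow_mul_cexp_neg_mul_Ioi ha (n + 1)).const_mul _),
      integral_const_mul, integral_const_mul, ih] at h
    simp only [ofReal_zero, zero_pow n.succ_ne_zero, zero_mul, sub_zero] at h
    rw [factorial_succ, pow_succ a (n + 1)]
    field_simp at h ⊢
    push_cast
    linear_combination -h

lemma integral_sum_pow_mul_cexp_neg_mul_Ioi {ι : Type*} {a : ℂ} (ha : 0 < a.re)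
    (s : Finset ι) (c : ι → ℂ) (k : ι → ℕ) :
    ∫ x in Ioi (0 : ℝ), (∑ i ∈ s, c i * (x : ℂ) ^ k i) * cexp (-(a * x))
      = ∑ i ∈ s, c i * (k i)! / a ^ (k i + 1) := by
  simp only [Finset.sum_mul, mul_assoc]
  rw [integral_finsetSum _ fun i _ => (integrableOn_pow_mul_cexp_neg_mul_Ioi ha (k i)).const_mul _]
  simp only [integral_const_mul, integral_pow_mul_cexp_neg_mul_Ioi ha, mul_div_assoc]

lemma cexp_arctan_mul_I_mul_cos_arctan (x : ℝ) :
    cexp (Real.arctan x * I) * Real.cos (Real.arctan x) = 1 / (1 - x * I) := by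
  have hne : (1 : ℂ) - x * I ≠ 0 := by
    intro h; simpa using congrArg Complex.re h
  have hsin : Real.sin (Real.arctan x) = x * Real.cos (Real.arctan x) := by
    rw [sin_arctan, cos_arctan]
    ring
  have hcos : (Real.cos (Real.arctan x) : ℂ) ^ 2 * (1 + x ^ 2) = 1 := by
    have h : Real.cos (Real.arctan x) ^ 2 * (1 + x ^ 2) = 1 := by
      rw [cos_sq_arctan]
      field_simp
    exact_mod_cast h
  rw [exp_mul_I, ← ofReal_cos, ← ofReal_sin, hsin, ofReal_mul, eq_div_iff hne]
  linear_combination hcos - (Real.cos (Real.arctan x) : ℂ) ^ 2 * x ^ 2 * I_sq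

lemma cexp_mul_radial_mul_eq_sum_pow_mul_cexp {N ℓ : ℕ} {R : ℝ → ℝ}
    (hR : ∀ ρ : ℝ, R ρ = Real.exp (-ρ / 2) * ρ ^ ℓ *
      ∑ t ∈ Finset.range (N - ℓ),
        (-1 : ℝ) ^ t * ((N + ℓ).choose (N - ℓ - 1 - t) : ℝ) * ρ ^ t / (t ! : ℝ))
    (β p r : ℝ) :
    cexp (I * p * r) * ((R (2 * β * r) : ℝ) : ℂ) * r =
      (∑ t ∈ Finset.range (N - ℓ), ((-1) ^ t * ((N + ℓ).choose (N - ℓ - 1 - t) : ℂ) *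
        (2 * β) ^ (ℓ + t) / t !) * (r : ℂ) ^ (ℓ + t + 1)) * cexp (-((β - p * I) * r)) := by
  have hdamping :
      cexp (I * p * r) * cexp (-(2 * β * r : ℝ) / 2) = cexp (-((β - p * I) * r)) := by
    rw [← Complex.exp_add]
    congr 1
    push_cast
    ring
  rw [hR, ← hdamping]
  push_cast
  simp only [Finset.mul_sum, Finset.sum_mul]
  refine Finset.sum_congr rfl fun t _ => ?_
  ring

theorem hydrogen_radial_momentum_wavefunction_trigonometric_general
    (N ℓ : ℕ) (β : ℝ) (hβ : 0 < β)
    (R : ℝ → ℝ)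
    (hR : ∀ ρ : ℝ, R ρ = Real.exp (-ρ / 2) * ρ ^ ℓ *
      ∑ t ∈ Finset.range (N - ℓ),
        (-1 : ℝ) ^ t * ((N + ℓ).choose (N - ℓ - 1 - t) : ℝ) * ρ ^ t / (t ! : ℝ))
    (p : ℝ) (θ : ℝ) (hθ : θ = Real.arctan (p / β)) :
    (∫ r in Set.Ioi (0 : ℝ),
        Complex.exp (Complex.I * p * r) * ((R (2 * β * r) : ℝ) : ℂ) * (r : ℂ))
      = ∑ t ∈ Finset.range (N - ℓ),
          ((((-1 : ℝ) ^ t * ((N + ℓ).choose (N - ℓ - 1 - t) : ℝ) * ((ℓ + t + 1)! : ℝ)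
              * 2 ^ (ℓ + t + 2) / ((t ! : ℝ) * (2 * β) ^ 2) : ℝ)) : ℂ)
            * Complex.exp (Complex.I * (((ℓ : ℝ) + t + 2 : ℝ) : ℂ) * (θ : ℂ))
            * ((Real.cos θ : ℝ) : ℂ) ^ (ℓ + t + 2) := by
  set a : ℂ := β - p * I with ha_def
  have ha : 0 < a.re := by simpa [a] using hβ
  have ha0 : a ≠ 0 := fun h => by simp [h] at ha
  have hβ0 : (β : ℂ) ≠ 0 := ofReal_ne_zero.mpr hβ.ne'
  have hphase : cexp (θ * I) * Real.cos θ = β / a := by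
    rw [hθ, cexp_arctan_mul_I_mul_cos_arctan, ha_def]
    push_cast
    field_simp
  simp_rw [cexp_mul_radial_mul_eq_sum_pow_mul_cexp hR, ← ha_def]
  rw [integral_sum_pow_mul_cexp_neg_mul_Ioi ha]
  refine Finset.sum_congr rfl fun t _ => ?_
  have hphase_pow :
      cexp (I * (((ℓ : ℝ) + t + 2 : ℝ) : ℂ) * θ) * (Real.cos θ : ℂ) ^ (ℓ + t + 2)
        = (β / a) ^ (ℓ + t + 2) := by
    rw [← hphase, mul_pow, ← Complex.exp_nat_mul]
    congr 2
    push_cast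
    ring
  rw [mul_assoc _ (cexp _), hphase_pow, div_pow]
  push_cast
  field_simp
  ring

/-- trigonometric closed form of the radial momentum-space hydrogen wave
functions. With `R_{Nℓ}(ρ) = e^{−ρ/2} ρ^ℓ Σ_t (−1)^t C(N+ℓ, N−ℓ−1−t) ρ^t/t!` and
`θ = arctan(p/β)`, the transform `ψ_{Nℓ}(p) = ∫₀^∞ e^{ipr} R_{Nℓ}(2βr) r dr` equals
`Σ_t b_t e^{i(ℓ+t+2)θ} cos^{ℓ+t+2} θ` where
`b_t = (−1)^t C(N+ℓ, N−ℓ−1−t) (ℓ+t+1)! 2^{ℓ+t+2} / (t! (2β)²)`. -/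
theorem hydrogen_radial_momentum_wavefunction_trigonometric
    (N ℓ : ℕ) (hN : 1 ≤ N) (hℓ : ℓ + 1 ≤ N) (β : ℝ) (hβ : 0 < β)
    (R : ℝ → ℝ)
    (hR : ∀ ρ : ℝ, R ρ = Real.exp (-ρ / 2) * ρ ^ ℓ *
      ∑ t ∈ Finset.range (N - ℓ),
        (-1 : ℝ) ^ t * ((N + ℓ).choose (N - ℓ - 1 - t) : ℝ) * ρ ^ t / (t ! : ℝ))
    (p : ℝ) (θ : ℝ) (hθ : θ = Real.arctan (p / β)) :
    (∫ r in Set.Ioi (0 : ℝ),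
        Complex.exp (Complex.I * p * r) * ((R (2 * β * r) : ℝ) : ℂ) * (r : ℂ))
      = ∑ t ∈ Finset.range (N - ℓ),
          ((((-1 : ℝ) ^ t * ((N + ℓ).choose (N - ℓ - 1 - t) : ℝ) * ((ℓ + t + 1)! : ℝ)
              * 2 ^ (ℓ + t + 2) / ((t ! : ℝ) * (2 * β) ^ 2) : ℝ)) : ℂ)
            * Complex.exp (Complex.I * (((ℓ : ℝ) + t + 2 : ℝ) : ℂ) * (θ : ℂ))
            * ((Real.cos θ : ℝ) : ℂ) ^ (ℓ + t + 2) :=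
  hydrogen_radial_momentum_wavefunction_trigonometric_general N ℓ β hβ R hR p θ hθ
end

section
/- Fix p ∈ ℝ and define ψ : (0,π) → ℂ by ψ(θ) = (1/ sin θ) · e^{ −i p · log( tan(θ/2) ) }. Then ψ is an eigenfunction of the geometric z-momentum operator on the unit sphere: for every θ ∈ (0,π), i · sin θ · ( ψ'(θ) + (cos θ / sin θ) · ψ(θ) ) = p · ψ(θ). -/
open Real Complex

/-!
Since `sin θ (ψ' + cot θ ψ) = (sin θ ψ)'`, the operator acts as `p̂_z ψ = i (sin θ ψ)'`.
For `ψ = E / sin θ` with `E = exp (-i p log (tan (θ/2)))` this is `i E'`, and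
`E' = -i p E / sin θ` because `log (tan (θ/2))` is a primitive of `1 / sin θ`.
-/

noncomputable def geometricMomentumZ (f : ℝ → ℂ) (θ : ℝ) : ℂ :=
  I * (Real.sin θ : ℂ) * (deriv f θ + ((Real.cos θ : ℂ) / (Real.sin θ : ℂ)) * f θ)

theorem Real.hasDerivAt_log_tan_half {x : ℝ} (hx : Real.sin x ≠ 0) :
    HasDerivAt (fun y => Real.log (Real.tan (y / 2))) (1 / Real.sin x) x := by
  have hsin : Real.sin x = 2 * Real.sin (x / 2) * Real.cos (x / 2) := by
    rw [← Real.sin_two_mul, mul_div_cancel₀ x two_ne_zero]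
  have hs : Real.sin (x / 2) ≠ 0 := fun h => hx (by rw [hsin, h]; ring)
  have hc : Real.cos (x / 2) ≠ 0 := fun h => hx (by rw [hsin, h]; ring)
  have ht : Real.tan (x / 2) ≠ 0 := by rw [Real.tan_eq_sin_div_cos]; exact div_ne_zero hs hc
  have htan := (Real.hasDerivAt_tan hc).comp x ((hasDerivAt_id' x).div_const 2)
  refine (htan.log ht).congr_deriv ?_
  rw [Function.comp_apply, Real.tan_eq_sin_div_cos, hsin]
  field_simp

theorem hasDerivAt_cexp_log_tan_half (p : ℝ) {x : ℝ} (hx : Real.sin x ≠ 0) :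
    HasDerivAt (fun y : ℝ => cexp (-I * p * (Real.log (Real.tan (y / 2)) : ℂ)))
      (-I * p / (Real.sin x : ℂ) * cexp (-I * p * (Real.log (Real.tan (x / 2)) : ℂ))) x := by
  have h := ((Real.hasDerivAt_log_tan_half hx).ofReal_comp.const_mul (-I * p)).cexp
  convert h using 1
  push_cast
  ring

theorem geometricMomentumZ_one_div_sin_mul {E : ℝ → ℂ} {e : ℂ} {θ : ℝ}
    (hE : HasDerivAt E e θ) (hθ : Real.sin θ ≠ 0) :
    geometricMomentumZ (fun x => 1 / (Real.sin x : ℂ) * E x) θ = I * e := by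
  have hsC : (Real.sin θ : ℂ) ≠ 0 := ofReal_ne_zero.mpr hθ
  have hsin : HasDerivAt (fun x : ℝ => (Real.sin x : ℂ)) (Real.cos θ : ℂ) θ :=
    (Real.hasDerivAt_sin θ).ofReal_comp
  have hψ : HasDerivAt (fun x => 1 / (Real.sin x : ℂ) * E x)
      (-(Real.cos θ : ℂ) / (Real.sin θ : ℂ) ^ 2 * E θ + 1 / (Real.sin θ : ℂ) * e) θ := by
    simp only [one_div]
    exact (hsin.inv hsC).mul hE
  rw [geometricMomentumZ, hψ.deriv]
  field_simp
  ring

/-- the function `ψ(θ) = (1/sin θ) e^{−ip log(tan(θ/2))}` is an eigenfunction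
of the geometric z-momentum operator `p̂_z = i sin θ (d/dθ + cot θ)` on the unit sphere:
`i sin θ (ψ'(θ) + (cos θ/sin θ) ψ(θ)) = p ψ(θ)` for all `θ ∈ (0,π)`. -/
theorem geometric_momentum_z_eigenfunction
    (p : ℝ) (ψ : ℝ → ℂ)
    (hψ : ∀ θ : ℝ, ψ θ = (1 / (Real.sin θ : ℂ)) *
      Complex.exp (-Complex.I * p * (Real.log (Real.tan (θ / 2)) : ℂ)))
    (θ : ℝ) (hθ : θ ∈ Set.Ioo (0 : ℝ) Real.pi) :
    Complex.I * (Real.sin θ : ℂ) *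
        (deriv ψ θ + ((Real.cos θ : ℂ) / (Real.sin θ : ℂ)) * ψ θ)
      = (p : ℂ) * ψ θ := by
  obtain rfl : ψ = _ := funext hψ
  have hsin : Real.sin θ ≠ 0 := (Real.sin_pos_of_pos_of_lt_pi hθ.1 hθ.2).ne'
  calc geometricMomentumZ _ θ
      = I * (-I * p / (Real.sin θ : ℂ) *
          cexp (-I * p * (Real.log (Real.tan (θ / 2)) : ℂ))) :=
        geometricMomentumZ_one_div_sin_mul (hasDerivAt_cexp_log_tan_half p hsin) hsin
    _ = p * (1 / (Real.sin θ : ℂ) * cexp (-I * p * (Real.log (Real.tan (θ / 2)) : ℂ))) := by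
        linear_combination (-(p : ℂ) / (Real.sin θ : ℂ) *
          cexp (-I * p * (Real.log (Real.tan (θ / 2)) : ℂ))) * I_mul_I
end
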